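/- In the GLM setting, the empirical variance of the loss vector satisfies var(θ) := (1/N)·Σ_{i=1}^N (f_i(θ) − (1/N)·Σ_{j=1}^N f_j(θ))² = θᵀ·V₀·θ, where V₀ := (1/N)·Σ_{i=1}^N (T_i − T̄)(T_i − T̄)ᵀ and T̄ := (1/N)·Σ_{i=1}^N T_i. Moreover, if θ̆ : ℝ → ℝ^d is a differentiable curve of stationary solutions (∇A(θ̆(τ)) = M(τ;θ̆(τ)) for all τ) with H(τ) := ∇²A(θ̆(τ)) + τ·V(τ;θ̆(τ)) invertible, then d/dτ [var(θ̆(τ))] = −2·θ̆(τ)ᵀ·V(τ;θ̆(τ))·H(τ)^{-1}·V₀·θ̆(τ). -/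

import Mathlib

open Real Finset

/-- Empirical log-partition function `Γ(t;θ) = log((1/N)·Σᵢ exp(−t·⟨θ,Tᵢ⟩))`. -/
noncomputable def glmGamma {d N : ℕ} (T : Fin N → EuclideanSpace ℝ (Fin d)) (t : ℝ)
    (θ : EuclideanSpace ℝ (Fin d)) : ℝ :=
  Real.log ((1 / (N : ℝ)) * ∑ i, Real.exp (-t * (inner ℝ θ (T i) : ℝ)))

/-- Tilted empirical mean `M(t;θ) = (1/N)·Σᵢ Tᵢ·exp(−t·⟨θ,Tᵢ⟩ − Γ(t;θ))`. -/
noncomputable def glmM {d N : ℕ} (T : Fin N → EuclideanSpace ℝ (Fin d)) (t : ℝ)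
    (θ : EuclideanSpace ℝ (Fin d)) : EuclideanSpace ℝ (Fin d) :=
  ∑ i, ((1 / (N : ℝ)) * Real.exp (-t * (inner ℝ θ (T i) : ℝ) - glmGamma T t θ)) • T i

/-- Tilted empirical covariance `V(t;θ)` of the sufficient statistic, as a linear operator. -/
noncomputable def glmV {d N : ℕ} (T : Fin N → EuclideanSpace ℝ (Fin d)) (t : ℝ)
    (θ : EuclideanSpace ℝ (Fin d)) :
    EuclideanSpace ℝ (Fin d) →L[ℝ] EuclideanSpace ℝ (Fin d) :=
  ∑ i, ((1 / (N : ℝ)) * Real.exp (-t * (inner ℝ θ (T i) : ℝ) - glmGamma T t θ)) •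
    ((innerSL ℝ (T i - glmM T t θ)).smulRight (T i - glmM T t θ))

/-- The untilted empirical covariance `V₀ = (1/N)·Σᵢ (Tᵢ − T̄)(Tᵢ − T̄)ᵀ`, with
`T̄ = (1/N)·Σᵢ Tᵢ`, as a linear operator. -/
noncomputable def glmV0 {d N : ℕ} (T : Fin N → EuclideanSpace ℝ (Fin d)) :
    EuclideanSpace ℝ (Fin d) →L[ℝ] EuclideanSpace ℝ (Fin d) :=
  ∑ i, ((1 / (N : ℝ)) : ℝ) •
    ((innerSL ℝ (T i - (1 / (N : ℝ)) • ∑ j, T j)).smulRight (T i - (1 / (N : ℝ)) • ∑ j, T j))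

/-- Empirical variance of the GLM loss vector `(f₁(θ),…,f_N(θ))`, `fᵢ(θ) = A(θ) − ⟨θ,Tᵢ⟩`. -/
noncomputable def glmLossVariance {d N : ℕ} (T : Fin N → EuclideanSpace ℝ (Fin d))
    (A : EuclideanSpace ℝ (Fin d) → ℝ) (θ : EuclideanSpace ℝ (Fin d)) : ℝ :=
  (1 / (N : ℝ)) * ∑ i, ((A θ - (inner ℝ θ (T i) : ℝ)) -
    (1 / (N : ℝ)) * ∑ j, (A θ - (inner ℝ θ (T j) : ℝ))) ^ 2

/-!
Since the losses share the term `A(θ)`, their centred values are `-⟪Tᵢ - T̄, θ⟫`, so their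
empirical variance is `⟪θ, V₀ θ⟫`.

`M(t;θ)` depends on `(t, θ)` only through `t • θ`, and as a function of `η = t • θ` it is the mean
of the exponentially tilted empirical measure, whose derivative is minus its covariance `V`.
Differentiating the stationarity equation `∇A(θ̆(τ)) = M(τ;θ̆(τ))` therefore gives
`H(τ) θ̆'(τ) = -V θ̆(τ)`. Finally `d/dτ ⟪θ̆, V₀ θ̆⟫ = 2 ⟪θ̆', V₀ θ̆⟫`, and `V` and `H(τ)⁻¹` are
symmetric (`H` is a Hessian plus a covariance), which moves the operators onto `θ̆(τ)`.
-/

open InnerProductSpace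

theorem sum_exp_pos {ι : Type*} [Fintype ι] [Nonempty ι] (f : ι → ℝ) :
    0 < ∑ i, Real.exp (f i) :=
  Finset.sum_pos (fun _ _ => Real.exp_pos _) Finset.univ_nonempty

section Gradient

variable {E : Type*} [NormedAddCommGroup E] [InnerProductSpace ℝ E] [CompleteSpace E]
  {A : E → ℝ}

theorem ContDiff.hasFDerivAt_gradient (hA : ContDiff ℝ 2 A) (x : E) :
    HasFDerivAt (gradient A)
      ((toDual ℝ E).symm.toLinearIsometry.toContinuousLinearMap ∘L fderiv ℝ (fderiv ℝ A) x) x :=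
  (toDual ℝ E).symm.toLinearIsometry.toContinuousLinearMap.hasFDerivAt.comp x
    ((hA.fderiv_right (m := 1) le_rfl).differentiable one_ne_zero x).hasFDerivAt

theorem ContDiff.isSymmetric_fderiv_gradient (hA : ContDiff ℝ 2 A) (x : E) :
    (fderiv ℝ (gradient A) x : E →ₗ[ℝ] E).IsSymmetric := by
  intro u v
  rw [(hA.hasFDerivAt_gradient x).fderiv]
  simp only [ContinuousLinearMap.coe_coe, ContinuousLinearMap.comp_apply]
  rw [LinearIsometry.coe_toContinuousLinearMap, LinearIsometryEquiv.coe_toLinearIsometry,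
    toDual_symm_apply, real_inner_comm, toDual_symm_apply]
  exact hA.contDiffAt.isSymmSndFDerivAt (by simp) u v

end Gradient

theorem LinearMap.IsSymmetric.of_rightInverse {𝕜 E : Type*} [RCLike 𝕜] [SeminormedAddCommGroup E]
    [InnerProductSpace 𝕜 E] {H G : E →ₗ[𝕜] E} (hH : H.IsSymmetric)
    (hG : Function.RightInverse G H) : G.IsSymmetric := fun u v =>
  calc inner 𝕜 (G u) v = inner 𝕜 (G u) (H (G v)) := by rw [hG v]
    _ = inner 𝕜 (H (G u)) (G v) := (hH _ _).symm
    _ = inner 𝕜 u (G v) := by rw [hG u]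

theorem LinearMap.IsSymmetric.hasDerivAt_inner_apply_self {E : Type*} [NormedAddCommGroup E]
    [InnerProductSpace ℝ E] {S : E →L[ℝ] E} (hS : (S : E →ₗ[ℝ] E).IsSymmetric)
    {γ : ℝ → E} {γ' : E} {τ : ℝ} (hγ : HasDerivAt γ γ' τ) :
    HasDerivAt (fun s => inner ℝ (γ s) (S (γ s))) (2 * inner ℝ γ' (S (γ τ))) τ := by
  refine (hγ.inner ℝ (S.hasFDerivAt.comp_hasDerivAt τ hγ)).congr_deriv ?_
  rw [← hS.apply_clm, real_inner_comm, Function.comp_apply]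
  ring

section GLM

variable {d N : ℕ} (T : Fin N → EuclideanSpace ℝ (Fin d))

local notation "E" => EuclideanSpace ℝ (Fin d)

theorem glmLossVariance_eq_inner_glmV0 (hN : 0 < N) (A : E → ℝ) (θ : E) :
    glmLossVariance T A θ = inner ℝ θ (glmV0 T θ) := by
  have hcentered : ∀ i, (A θ - inner ℝ θ (T i)) - (1 / (N : ℝ)) * ∑ j, (A θ - inner ℝ θ (T j))
      = -inner ℝ (T i - (1 / (N : ℝ)) • ∑ j, T j) θ := by
    intro i
    have hN' : (N : ℝ) ≠ 0 := by positivity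
    rw [inner_sub_left, real_inner_smul_left, sum_inner, Finset.sum_sub_distrib,
      Finset.sum_const, Finset.card_univ, Fintype.card_fin, nsmul_eq_mul]
    simp only [real_inner_comm θ]
    field_simp
    ring
  simp only [glmLossVariance, hcentered]
  simp only [glmV0, _root_.sum_apply, smul_apply, ← rankOne_def, rankOne_apply, inner_sum,
    Finset.mul_sum, real_inner_smul_right]
  refine Finset.sum_congr rfl fun i _ => ?_
  rw [real_inner_comm θ]
  ring

theorem glmV0_isSymmetric : (glmV0 T : E →ₗ[ℝ] E).IsSymmetric := by
  simp only [glmV0, ContinuousLinearMap.toLinearMap_sum,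
    ContinuousLinearMap.toLinearMap_smul, ← rankOne_def]
  exact LinearMap.isSymmetric_sum _ fun i _ => (isSymmetric_rankOne_self _).smul (conj_trivial _)

theorem glmV_isSymmetric (t : ℝ) (θ : E) : (glmV T t θ : E →ₗ[ℝ] E).IsSymmetric := by
  simp only [glmV, ContinuousLinearMap.toLinearMap_sum,
    ContinuousLinearMap.toLinearMap_smul, ← rankOne_def]
  exact LinearMap.isSymmetric_sum _ fun i _ => (isSymmetric_rankOne_self _).smul (conj_trivial _)

noncomputable def glmWeight (t : ℝ) (θ : E) (i : Fin N) : ℝ :=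
  (1 / (N : ℝ)) * Real.exp (-t * inner ℝ θ (T i) - glmGamma T t θ)

theorem glmM_eq_sum_glmWeight (t : ℝ) (θ : E) : glmM T t θ = ∑ i, glmWeight T t θ i • T i := rfl

theorem glmV_eq_sum_glmWeight (t : ℝ) (θ : E) :
    glmV T t θ = ∑ i, glmWeight T t θ i • rankOne ℝ (T i - glmM T t θ) (T i - glmM T t θ) := rfl

theorem glmWeight_eq_div (hN : 0 < N) (t : ℝ) (θ : E) (i : Fin N) :
    glmWeight T t θ i
      = Real.exp (-t * inner ℝ θ (T i)) / ∑ j, Real.exp (-t * inner ℝ θ (T j)) := by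
  have : Nonempty (Fin N) := Fin.pos_iff_nonempty.mp hN
  have hpos := sum_exp_pos fun j => -t * inner ℝ θ (T j)
  rw [glmWeight, glmGamma, Real.exp_sub, Real.exp_log (by positivity)]
  field_simp

theorem sum_glmWeight (hN : 0 < N) (t : ℝ) (θ : E) : ∑ i, glmWeight T t θ i = 1 := by
  have : Nonempty (Fin N) := Fin.pos_iff_nonempty.mp hN
  simp only [glmWeight_eq_div T hN, ← Finset.sum_div]
  exact div_self (sum_exp_pos _).ne'

theorem sum_glmWeight_mul_inner_sub_glmM (hN : 0 < N) (t : ℝ) (θ v : E) :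
    ∑ i, glmWeight T t θ i * inner ℝ (T i - glmM T t θ) v = 0 := by
  simp only [inner_sub_left, mul_sub, Finset.sum_sub_distrib, ← Finset.sum_mul,
    sum_glmWeight T hN, one_mul]
  rw [sub_eq_zero, glmM_eq_sum_glmWeight, sum_inner]
  simp only [real_inner_smul_left]

theorem glmGamma_eq_one_smul (t : ℝ) (θ : E) : glmGamma T t θ = glmGamma T 1 (t • θ) := by
  simp [glmGamma, real_inner_smul_left]

theorem glmWeight_eq_one_smul (t : ℝ) (θ : E) : glmWeight T t θ = glmWeight T 1 (t • θ) := by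
  ext i
  simp [glmWeight, glmGamma_eq_one_smul T t, real_inner_smul_left]

theorem glmM_eq_one_smul (t : ℝ) (θ : E) : glmM T t θ = glmM T 1 (t • θ) := by
  simp only [glmM_eq_sum_glmWeight, glmWeight_eq_one_smul T t]

theorem glmV_eq_one_smul (t : ℝ) (θ : E) : glmV T t θ = glmV T 1 (t • θ) := by
  simp only [glmV_eq_sum_glmWeight, glmWeight_eq_one_smul T t, glmM_eq_one_smul T t]

theorem hasFDerivAt_glmGamma_one (hN : 0 < N) (η : E) :
    HasFDerivAt (glmGamma T 1) (-innerSL ℝ (glmM T 1 η)) η := by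
  have : Nonempty (Fin N) := Fin.pos_iff_nonempty.mp hN
  have hΓ : glmGamma T 1
      = fun η => Real.log ((1 / (N : ℝ)) * ∑ i, Real.exp (-innerSL ℝ (T i) η)) := by
    ext η; simp [glmGamma, real_inner_comm]
  rw [hΓ]
  refine ((HasFDerivAt.fun_sum fun i _ => (innerSL ℝ (T i)).hasFDerivAt.neg.exp).const_mul
    _ |>.log ?_).congr_fderiv ?_
  · exact mul_ne_zero (by positivity) (sum_exp_pos _).ne'
  · ext v
    simp only [one_div, coe_innerSL_apply, Pi.neg_apply, mul_inv_rev, inv_inv, smul_neg,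
      sum_neg_distrib, neg_apply, smul_apply, _root_.sum_apply, smul_eq_mul, glmM_eq_sum_glmWeight,
      glmWeight_eq_div T hN, real_inner_comm (T _), neg_mul, one_mul, map_sum, map_smul,
      div_mul_eq_mul_div, ← sum_div, neg_inj]
    field_simp

theorem hasFDerivAt_glmWeight_one (hN : 0 < N) (η : E) (i : Fin N) :
    HasFDerivAt (fun η => glmWeight T 1 η i)
      (-glmWeight T 1 η i • innerSL ℝ (T i - glmM T 1 η)) η := by
  have hexp : HasFDerivAt (fun η : E => -1 * inner ℝ η (T i)) (-innerSL ℝ (T i)) η := by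
    have h : (fun η : E => -1 * inner ℝ η (T i)) = fun η => -innerSL ℝ (T i) η := by
      ext; simp [real_inner_comm]
    exact h ▸ (innerSL ℝ (T i)).hasFDerivAt.fun_neg
  refine ((hexp.sub (hasFDerivAt_glmGamma_one T hN η)).exp.const_mul _).congr_fderiv ?_
  ext v
  simp only [glmWeight, one_div, neg_mul, one_mul, Pi.sub_apply, sub_neg_eq_add, smul_add,
    smul_neg, add_apply, neg_apply, smul_apply, coe_innerSL_apply, smul_eq_mul, map_sub, neg_smul,
    sub_apply]
  ring

theorem hasFDerivAt_glmM_one (hN : 0 < N) (η : E) :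
    HasFDerivAt (glmM T 1) (-glmV T 1 η) η := by
  have hM : glmM T 1 = fun η => ∑ i, glmWeight T 1 η i • T i := by
    ext1 η; exact glmM_eq_sum_glmWeight T 1 η
  rw [hM]
  refine (HasFDerivAt.fun_sum fun i _ =>
    (hasFDerivAt_glmWeight_one T hN η i).smul_const (T i)).congr_fderiv ?_
  ext1 v
  have hcentered := sum_glmWeight_mul_inner_sub_glmM T hN 1 η v
  rw [glmV_eq_sum_glmWeight]
  simp only [_root_.sum_apply, ContinuousLinearMap.smulRight_apply, smul_apply,
    innerSL_apply_apply, rankOne_apply, neg_apply, smul_sub,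
    Finset.sum_sub_distrib, smul_smul, ← Finset.sum_smul, hcentered, zero_smul, sub_zero, neg_smul,
    Finset.sum_neg_distrib, smul_eq_mul]

theorem hasDerivAt_glmM_comp (hN : 0 < N) {θ : ℝ → E} {θ' : E} {τ : ℝ} (hθ : HasDerivAt θ θ' τ) :
    HasDerivAt (fun s => glmM T s (θ s)) (-glmV T τ (θ τ) (θ τ + τ • θ')) τ := by
  have hM : (fun s => glmM T s (θ s)) = glmM T 1 ∘ fun s => s • θ s :=
    funext fun s => glmM_eq_one_smul T s (θ s)
  rw [hM, glmV_eq_one_smul T τ]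
  refine ((hasFDerivAt_glmM_one T hN _).comp_hasDerivAt τ
    ((hasDerivAt_id' τ).smul hθ)).congr_deriv ?_
  rw [one_smul, add_comm]
  rfl

theorem fderiv_gradient_add_smul_glmV_apply_deriv (hN : 0 < N) {A : E → ℝ}
    (hA : ContDiff ℝ 2 A) {θ : ℝ → E} (hθ : Differentiable ℝ θ)
    (hstat : ∀ s, gradient A (θ s) = glmM T s (θ s)) (τ : ℝ) :
    (fderiv ℝ (gradient A) (θ τ) + τ • glmV T τ (θ τ)) (deriv θ τ)
      = -(glmV T τ (θ τ) (θ τ)) := by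
  have hgrad : HasDerivAt (fun s => gradient A (θ s))
      (fderiv ℝ (gradient A) (θ τ) (deriv θ τ)) τ :=
    (hA.hasFDerivAt_gradient _).differentiableAt.hasFDerivAt.comp_hasDerivAt τ (hθ τ).hasDerivAt
  rw [funext hstat] at hgrad
  rw [add_apply, hgrad.unique (hasDerivAt_glmM_comp T hN (hθ τ).hasDerivAt)]
  simp only [map_add, map_smul, smul_apply]
  abel

end GLM

/-- **Empirical loss variance and its derivative along the solution path.** In the GLM
setting, the empirical variance of the losses is the quadratic form `var(θ) = θᵀ·V₀·θ`.
Moreover, if `θ̆` is a differentiable curve of stationary solutions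
(`∇A(θ̆(τ)) = M(τ;θ̆(τ))`) with `H(τ) = ∇²A(θ̆(τ)) + τ·V(τ;θ̆(τ))` two-sidedly invertible,
then `d/dτ var(θ̆(τ)) = −2·θ̆(τ)ᵀ·V(τ;θ̆(τ))·H(τ)⁻¹·V₀·θ̆(τ)`. -/
theorem glm_variance_formula_and_derivative {d N : ℕ} (hN : 0 < N)
    (T : Fin N → EuclideanSpace ℝ (Fin d))
    (A : EuclideanSpace ℝ (Fin d) → ℝ) (hA : ContDiff ℝ 2 A)
    (θbreve : ℝ → EuclideanSpace ℝ (Fin d)) (hθ : Differentiable ℝ θbreve)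
    (hstat : ∀ τ : ℝ, gradient A (θbreve τ) = glmM T τ (θbreve τ))
    (H Hinv : ℝ → EuclideanSpace ℝ (Fin d) →L[ℝ] EuclideanSpace ℝ (Fin d))
    (hH : ∀ τ : ℝ, H τ = fderiv ℝ (gradient A) (θbreve τ) + τ • glmV T τ (θbreve τ))
    (hHinv : ∀ τ : ℝ,
      (H τ).comp (Hinv τ) = ContinuousLinearMap.id ℝ (EuclideanSpace ℝ (Fin d)) ∧
      (Hinv τ).comp (H τ) = ContinuousLinearMap.id ℝ (EuclideanSpace ℝ (Fin d))) :
    (∀ θ : EuclideanSpace ℝ (Fin d),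
      glmLossVariance T A θ = (inner ℝ θ (glmV0 T θ) : ℝ)) ∧
    (∀ τ : ℝ, deriv (fun s => glmLossVariance T A (θbreve s)) τ =
      -2 * (inner ℝ (θbreve τ)
        (glmV T τ (θbreve τ) (Hinv τ (glmV0 T (θbreve τ)))) : ℝ)) := by
  refine ⟨glmLossVariance_eq_inner_glmV0 T hN A, fun τ => ?_⟩
  have hH_symm : (H τ : EuclideanSpace ℝ (Fin d) →ₗ[ℝ] _).IsSymmetric := by
    rw [hH τ, ContinuousLinearMap.toLinearMap_add, ContinuousLinearMap.toLinearMap_smul]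
    exact (hA.isSymmetric_fderiv_gradient _).add ((glmV_isSymmetric T τ _).smul (conj_trivial τ))
  have hHinv_symm : (Hinv τ : EuclideanSpace ℝ (Fin d) →ₗ[ℝ] _).IsSymmetric :=
    hH_symm.of_rightInverse fun z => congr($((hHinv τ).1) z)
  have hθ' : deriv θbreve τ = -Hinv τ (glmV T τ (θbreve τ) (θbreve τ)) :=
    calc deriv θbreve τ = Hinv τ (H τ (deriv θbreve τ)) := congr($((hHinv τ).2) _).symm
      _ = _ := by rw [hH τ, fderiv_gradient_add_smul_glmV_apply_deriv T hN hA hθ hstat, map_neg]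
  have hvar : (fun s => glmLossVariance T A (θbreve s))
      = fun s => inner ℝ (θbreve s) (glmV0 T (θbreve s)) :=
    funext fun s => glmLossVariance_eq_inner_glmV0 T hN A (θbreve s)
  rw [hvar, ((glmV0_isSymmetric T).hasDerivAt_inner_apply_self (hθ τ).hasDerivAt).deriv, hθ',
    inner_neg_left, hHinv_symm.apply_clm, (glmV_isSymmetric T τ _).apply_clm]
  ring
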